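/- Let M := {(v,u) ∈ ℝ³ × ℝ³ : ⟨u,u⟩ = 1 and ⟨u,v⟩ = 0} (the tangent bundle of the unit sphere, with its topology as a subspace of ℝ⁶). Let G := ℝ³ ⋊ O(3) be the group with underlying set ℝ³ × O(3) and multiplication (b,A)·(b',A') = (b + det(A)·A·b', A·A'), acting on M by (b,A)·(v,u) := (A·v + b × (A·u), A·u). Then there is no subgroup Γ of G whose induced action on M is properly discontinuous and cocompact. -/
import Mathlib


open Matrix

/-- The standard cross product on `ℝ³`. -/
def cross3 (x y : Fin 3 → ℝ) : Fin 3 → ℝ :=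
  ![x 1 * y 2 - x 2 * y 1, x 2 * y 0 - x 0 * y 2, x 0 * y 1 - x 1 * y 0]

/-- The tangent bundle `M = {(v,u) : ⟨u,u⟩ = 1, ⟨u,v⟩ = 0}` of the unit sphere. -/
def sphereTangent : Set ((Fin 3 → ℝ) × (Fin 3 → ℝ)) :=
  {p | p.2 ⬝ᵥ p.2 = 1 ∧ p.2 ⬝ᵥ p.1 = 0}

/-- The orbit equivalence relation on an invariant subset `M` induced by a group `Γ` of
permutations of the ambient space: `p ~ q` iff `γ p = q` for some `γ ∈ Γ`. -/
def permOrbitSetoid {X : Type*} (Γ : Subgroup (Equiv.Perm X)) (M : Set X) : Setoid M where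
  r p q := ∃ γ ∈ Γ, γ (p : X) = (q : X)
  iseqv := by
    refine ⟨fun p => ⟨1, Γ.one_mem, rfl⟩, ?_, ?_⟩
    · rintro p q ⟨γ, hγ, h⟩
      exact ⟨γ⁻¹, Γ.inv_mem hγ, by rw [← h]; simp⟩
    · rintro p q r ⟨γ, hγ, h⟩ ⟨γ', hγ', h'⟩
      exact ⟨γ' * γ, Γ.mul_mem hγ' hγ, by simp [h, h']⟩

lemma mulVec_cont (A : Matrix (Fin 3) (Fin 3) ℝ) :
    Continuous fun v : Fin 3 → ℝ => A.mulVec v := by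
  refine continuous_pi fun i => ?_
  simp only [Matrix.mulVec, dotProduct]
  exact continuous_finset_sum _ fun j _ => continuous_const.mul (continuous_apply j)

lemma cross3_cont (b : Fin 3 → ℝ) : Continuous fun y : Fin 3 → ℝ => cross3 b y := by
  refine continuous_pi fun i => ?_
  fin_cases i <;>
    · simp only [cross3, Matrix.cons_val_zero, Matrix.cons_val_one, Matrix.head_cons,
        Matrix.cons_val', Matrix.cons_val_fin_one, Matrix.empty_val', Fin.isValue]
      exact ((continuous_const.mul (continuous_apply _)).sub
        (continuous_const.mul (continuous_apply _)))

lemma cross3_self_smul (b : Fin 3 → ℝ) (c : ℝ) : cross3 b (c • b) = 0 := by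
  funext i
  fin_cases i <;> simp [cross3] <;> ring

lemma cross3_zero_left (y : Fin 3 → ℝ) : cross3 0 y = 0 := by
  funext i; fin_cases i <;> simp [cross3]

lemma ortho_transpose {A : Matrix (Fin 3) (Fin 3) ℝ}
    (hA : ∀ x y : Fin 3 → ℝ, A.mulVec x ⬝ᵥ A.mulVec y = x ⬝ᵥ y) :
    A * Aᵀ = 1 := by
  rw [mul_eq_one_comm]
  ext i j
  have h := hA (Pi.single i 1) (Pi.single j 1)
  simp only [Matrix.mulVec_single, dotProduct, Pi.single_apply, mul_one] at h ⊢
  simpa [Matrix.mul_apply, Matrix.transpose_apply, Matrix.one_apply, eq_comm] using h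

/-- For each `(b,A)`, there is a unit vector `e` with `cross3 b e = 0`. -/
lemma exists_unit_cross_zero (b : Fin 3 → ℝ) :
    ∃ e : Fin 3 → ℝ, e ⬝ᵥ e = 1 ∧ cross3 b e = 0 := by
  by_cases hb : b = 0
  · refine ⟨![1, 0, 0], by simp [dotProduct, Fin.sum_univ_three], ?_⟩
    rw [hb]; exact cross3_zero_left _
  · have hbb : (0 : ℝ) < b ⬝ᵥ b := by
      rcases lt_or_eq_of_le (Finset.sum_nonneg fun i _ => mul_self_nonneg (b i)) with h | h
      · exact h
      · exact absurd (dotProduct_self_eq_zero.mp h.symm) hb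
    set c : ℝ := Real.sqrt (b ⬝ᵥ b) with hc
    have hc0 : c ≠ 0 := ne_of_gt (Real.sqrt_pos.mpr hbb)
    refine ⟨c⁻¹ • b, ?_, cross3_self_smul b c⁻¹⟩
    rw [smul_dotProduct, dotProduct_smul, smul_eq_mul, smul_eq_mul]
    have hcc : c * c = b ⬝ᵥ b := Real.mul_self_sqrt hbb.le
    rw [← hcc]
    field_simp

abbrev X3 : Type := (Fin 3 → ℝ) × (Fin 3 → ℝ)

/-- The isometry group `G = ℝ³ ⋊ O(3)` of `Z(1,c) = TS²`, with multiplication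
`(b,A)·(b',A') = (b + det(A)·A·b', A·A')` and action `(b,A)·(v,u) = (Av + b × (Au), Au)`
(realized faithfully as a group of transformations of `ℝ³ × ℝ³`), has no subgroup `Γ`
whose induced action on `M = TS²` is properly discontinuous and cocompact. -/
theorem stmt6 :
    ¬ ∃ Γ : Subgroup (Equiv.Perm ((Fin 3 → ℝ) × (Fin 3 → ℝ))),
      -- Γ is a subgroup of `ℝ³ ⋊ O(3)`: each element is a transformation `(b,A)`
      (∀ γ ∈ Γ, ∃ (b : Fin 3 → ℝ) (A : Matrix (Fin 3) (Fin 3) ℝ),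
        (∀ x y : Fin 3 → ℝ, A.mulVec x ⬝ᵥ A.mulVec y = x ⬝ᵥ y) ∧
        ∀ p : (Fin 3 → ℝ) × (Fin 3 → ℝ),
          γ p = (A.mulVec p.1 + cross3 b (A.mulVec p.2), A.mulVec p.2)) ∧
      -- the action of Γ on M is properly discontinuous
      (∀ K L : Set ((Fin 3 → ℝ) × (Fin 3 → ℝ)), K ⊆ sphereTangent → L ⊆ sphereTangent →
        IsCompact K → IsCompact L →
        {γ : Equiv.Perm ((Fin 3 → ℝ) × (Fin 3 → ℝ)) | γ ∈ Γ ∧ (γ '' K ∩ L).Nonempty}.Finite) ∧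
      -- and cocompact: the orbit space M/Γ is compact
      CompactSpace (Quotient (permOrbitSetoid Γ sphereTangent)) := by
  rintro ⟨Γ, hform, hpd, hcc⟩
  -- the zero section K
  set U : Set (Fin 3 → ℝ) := {u | u ⬝ᵥ u = 1} with hU
  set K : Set X3 := (fun u : Fin 3 → ℝ => ((0 : Fin 3 → ℝ), u)) '' U with hK
  have hUc : IsCompact U := by
    apply Metric.isCompact_of_isClosed_isBounded
    · have : U = (fun u : Fin 3 → ℝ => u ⬝ᵥ u) ⁻¹' {1} := rfl
      rw [this]
      refine IsClosed.preimage ?_ isClosed_singleton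
      simp only [dotProduct]
      exact continuous_finset_sum _ fun j _ => (continuous_apply j).mul (continuous_apply j)
    · rw [Metric.isBounded_iff_subset_closedBall 0]
      refine ⟨1, fun u hu => ?_⟩
      rw [Metric.mem_closedBall, dist_zero_right]
      rw [pi_norm_le_iff_of_nonneg zero_le_one]
      intro i
      rw [Real.norm_eq_abs, ← sq_le_one_iff_abs_le_one, sq]
      calc u i * u i ≤ ∑ j, u j * u j :=
            Finset.single_le_sum (fun j _ => mul_self_nonneg (u j)) (Finset.mem_univ i)
        _ = 1 := hu
  have hKc : IsCompact K := hUc.image (continuous_const.prodMk continuous_id)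
  have hKsub : K ⊆ sphereTangent := by
    rintro p ⟨u, hu, rfl⟩
    exact ⟨hu, dotProduct_zero u⟩
  -- every γ ∈ Γ maps a point of K into K
  have hall : (Γ : Set (Equiv.Perm X3)) ⊆
      {γ : Equiv.Perm X3 | γ ∈ Γ ∧ (γ '' K ∩ K).Nonempty} := by
    intro γ hγ
    obtain ⟨b, A, hA, hf⟩ := hform γ hγ
    obtain ⟨e, he1, he2⟩ := exists_unit_cross_zero b
    have hAAt : A * Aᵀ = 1 := ortho_transpose hA
    have hAe : A.mulVec (Aᵀ.mulVec e) = e := by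
      rw [Matrix.mulVec_mulVec, hAAt, Matrix.one_mulVec]
    have hAt : Aᵀ.mulVec e ⬝ᵥ Aᵀ.mulVec e = 1 := by
      have := hA (Aᵀ.mulVec e) (Aᵀ.mulVec e)
      rw [hAe] at this
      rw [← this, he1]
    refine ⟨hγ, (0, e), ⟨⟨((0 : Fin 3 → ℝ), Aᵀ.mulVec e), ⟨Aᵀ.mulVec e, hAt, rfl⟩, ?_⟩,
      ⟨e, he1, rfl⟩⟩⟩
    rw [hf]
    simp only [Matrix.mulVec_zero, hAe, he2, zero_add]
  have hfin : (Γ : Set (Equiv.Perm X3)).Finite :=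
    Set.Finite.subset (hpd K K hKsub hKsub hKc hKc) hall
  set s : Finset (Equiv.Perm X3) := hfin.toFinset with hs
  have hmem : ∀ γ, γ ∈ s ↔ γ ∈ Γ := fun γ => hfin.mem_toFinset
  -- the invariant function
  set F : sphereTangent → ℝ := fun p => ∑ γ ∈ s, ‖(γ (p : X3)).1‖ with hF
  have hinv : ∀ p q : sphereTangent, (permOrbitSetoid Γ sphereTangent).r p q → F p = F q := by
    rintro p q ⟨δ, hδ, hδp⟩
    have : F q = ∑ γ ∈ s, ‖((γ * δ) (p : X3)).1‖ := by
      simp only [hF, ← hδp, Equiv.Perm.mul_apply]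
    rw [this, hF]
    refine Finset.sum_nbij' (fun γ => γ * δ⁻¹) (fun γ => γ * δ) ?_ ?_ ?_ ?_ ?_
    · intro a ha; rw [hmem] at ha ⊢; exact Γ.mul_mem ha (Γ.inv_mem hδ)
    · intro a ha; rw [hmem] at ha ⊢; exact Γ.mul_mem ha hδ
    · intro a _; group
    · intro a _; group
    · intro a _; simp [mul_assoc]
  have hFc : Continuous F := by
    refine continuous_finset_sum _ fun γ hγ => ?_
    obtain ⟨b, A, hA, hf⟩ := hform γ ((hmem γ).mp hγ)
    have : (fun p : sphereTangent => ‖(γ (p : X3)).1‖) =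
        fun p : sphereTangent =>
          ‖A.mulVec (p : X3).1 + cross3 b (A.mulVec (p : X3).2)‖ := by
      funext p; rw [hf]
    rw [this]
    apply Continuous.norm
    exact ((mulVec_cont A).comp (continuous_fst.comp continuous_subtype_val)).add
      ((cross3_cont b).comp ((mulVec_cont A).comp (continuous_snd.comp continuous_subtype_val)))
  -- descend to the quotient
  set Fbar : Quotient (permOrbitSetoid Γ sphereTangent) → ℝ :=
    Quotient.lift F hinv with hFbar
  have hFbarC : Continuous Fbar := hFc.quotient_lift hinv
  obtain ⟨C, hC⟩ := (isCompact_range hFbarC).bddAbove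
  rw [mem_upperBounds] at hC
  -- a point with large first coordinate
  have hp : ((![0, C + 1, 0], ![1, 0, 0]) : X3) ∈ sphereTangent := by
    constructor <;> simp [dotProduct, Fin.sum_univ_three]
  set p : sphereTangent := ⟨(![0, C + 1, 0], ![1, 0, 0]), hp⟩ with hpdef
  have h1 : F p ≤ C := hC _ ⟨Quotient.mk _ p, rfl⟩
  have h2 : ‖(p : X3).1‖ ≤ F p := by
    have h1s : (1 : Equiv.Perm X3) ∈ s := (hmem 1).mpr Γ.one_mem
    have := Finset.single_le_sum (f := fun γ : Equiv.Perm X3 => ‖(γ (p : X3)).1‖)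
      (fun i _ => norm_nonneg _) h1s
    simpa using this
  have h3 : C + 1 ≤ ‖(p : X3).1‖ := by
    have := norm_le_pi_norm ((p : X3).1) 1
    have hv : (p : X3).1 1 = C + 1 := rfl
    rw [hv, Real.norm_eq_abs] at this
    linarith [le_abs_self (C + 1)]
  linarith
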